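/- Let G be a simple graph on n vertices with m edges in which every vertex has degree at most 4, there are no isolated vertices, every edge has at least one endpoint of degree 4, and the number of degree-2 vertices plus the number of degree-3 vertices is at most 1. Then AG(G) = (2n+5m)/6 + e, where e = 0 if 2m-n ≡ 0 (mod 3), e = 3/sqrt(2) - 13/6 if 2m-n ≡ 1 (mod 3), and e = 21/(4*sqrt(3)) - 37/12 if 2m-n ≡ 2 (mod 3). -/
import Mathlib

noncomputable def agCost (i j : ℕ) : ℝ := ((i : ℝ) + j) / (2 * Real.sqrt ((i : ℝ) * j))

lemma agCost_comm (i j : ℕ) : agCost i j = agCost j i := by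
  unfold agCost; rw [add_comm, mul_comm (i : ℝ) (j : ℝ)]

noncomputable def agIndex {V : Type*} [Fintype V] (G : SimpleGraph V) [DecidableRel G.Adj] : ℝ :=
  ∑ e ∈ G.edgeFinset,
    Sym2.lift ⟨fun u v => agCost (G.degree u) (G.degree v),
      fun u v => agCost_comm (G.degree u) (G.degree v)⟩ e

lemma agCost_44 : agCost 4 4 = 1 := by
  unfold agCost
  have : ((4:ℕ):ℝ) * ((4:ℕ):ℝ) = 4 * 4 := by norm_num
  rw [this]
  rw [show (4:ℝ)*4 = 16 by norm_num, show (16:ℝ) = 4^2 by norm_num, Real.sqrt_sq (by norm_num)]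
  norm_num

lemma agCost_14 : agCost 1 4 = 5/4 := by
  unfold agCost
  rw [show ((1:ℕ):ℝ) * ((4:ℕ):ℝ) = 2^2 by norm_num, Real.sqrt_sq (by norm_num)]
  push_cast; norm_num

lemma agCost_24 : agCost 2 4 = 3 / (2 * Real.sqrt 2) := by
  unfold agCost
  rw [show ((2:ℕ):ℝ) * ((4:ℕ):ℝ) = 2^2 * 2 by norm_num, Real.sqrt_mul (by positivity),
    Real.sqrt_sq (by norm_num)]
  have h2 : Real.sqrt 2 > 0 := Real.sqrt_pos.mpr (by norm_num)
  push_cast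
  field_simp
  ring

lemma agCost_34 : agCost 3 4 = 7 / (4 * Real.sqrt 3) := by
  unfold agCost
  rw [show ((3:ℕ):ℝ) * ((4:ℕ):ℝ) = 2^2 * 3 by norm_num, Real.sqrt_mul (by positivity),
    Real.sqrt_sq (by norm_num)]
  have h3 : Real.sqrt 3 > 0 := Real.sqrt_pos.mpr (by norm_num)
  push_cast
  field_simp
  ring

/-- sum over vertices by degree class -/
lemma sum_classes {V : Type*} [Fintype V] [DecidableEq V] (d : V → ℕ)
    (h : ∀ v, d v = 1 ∨ d v = 2 ∨ d v = 3 ∨ d v = 4)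
    {M : Type*} [AddCommMonoid M] (f : ℕ → M) :
    ∑ v, f (d v) =
      (Finset.univ.filter fun v => d v = 1).card • f 1 +
      (Finset.univ.filter fun v => d v = 2).card • f 2 +
      (Finset.univ.filter fun v => d v = 3).card • f 3 +
      (Finset.univ.filter fun v => d v = 4).card • f 4 := by
  have : ∀ v, f (d v) = (if d v = 1 then f 1 else 0) + (if d v = 2 then f 2 else 0)
      + (if d v = 3 then f 3 else 0) + (if d v = 4 then f 4 else 0) := by
    intro v
    rcases h v with h' | h' | h' | h' <;> simp [h']
  rw [Finset.sum_congr rfl (fun v _ => this v)]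
  simp only [Finset.sum_add_distrib, Finset.sum_ite_eq, ← Finset.sum_filter]
  simp [Finset.sum_const]

lemma agIndex_eq {V : Type*} [Fintype V] [DecidableEq V]
    (G : SimpleGraph V) [DecidableRel G.Adj]
    (hedge : ∀ u v, G.Adj u v → G.degree u = 4 ∨ G.degree v = 4) :
    agIndex G = ∑ v, (G.degree v : ℝ) * (agCost (G.degree v) 4 - 1/2) := by
  unfold agIndex
  have h1 : ∀ e ∈ G.edgeFinset,
      Sym2.lift ⟨fun u v => agCost (G.degree u) (G.degree v),
        fun u v => agCost_comm (G.degree u) (G.degree v)⟩ e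
        = ∑ v, if v ∈ e then (agCost (G.degree v) 4 - 1/2) else 0 := by
    intro e he
    induction e with
    | _ u v =>
      rw [SimpleGraph.mem_edgeFinset, SimpleGraph.mem_edgeSet] at he
      have hne : u ≠ v := he.ne
      have hfil : (Finset.univ.filter fun x => x ∈ s(u, v)) = {u, v} := by
        ext x; simp [Sym2.mem_iff]
      rw [← Finset.sum_filter, hfil, Finset.sum_pair hne]
      show agCost (G.degree u) (G.degree v) = _
      rcases hedge u v he with h4 | h4
      · rw [h4, agCost_comm 4 (G.degree v), agCost_44]; ring
      · rw [h4, agCost_44]; ring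
  rw [Finset.sum_congr rfl h1, Finset.sum_comm]
  refine Finset.sum_congr rfl fun v _ => ?_
  rw [← Finset.sum_filter, ← SimpleGraph.incidenceFinset_eq_filter, Finset.sum_const,
    SimpleGraph.card_incidenceFinset_eq_degree]
  simp [nsmul_eq_mul, mul_comm]

theorem stmt_19 {V : Type*} [Fintype V] [DecidableEq V]
    (G : SimpleGraph V) [DecidableRel G.Adj]
    (n m : ℕ) (hn : n = Fintype.card V) (hm : m = G.edgeFinset.card)
    (hmax : ∀ v, G.degree v ≤ 4)
    (hiso : ∀ v, 1 ≤ G.degree v)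
    (hedge : ∀ u v, G.Adj u v → G.degree u = 4 ∨ G.degree v = 4)
    (h23 : (Finset.univ.filter fun v => G.degree v = 2).card
        + (Finset.univ.filter fun v => G.degree v = 3).card ≤ 1) :
    agIndex G = (2 * (n : ℝ) + 5 * m) / 6 +
      (if (2 * (m : ℤ) - n) % 3 = 0 then 0
       else if (2 * (m : ℤ) - n) % 3 = 1 then 3 / Real.sqrt 2 - 13 / 6
       else 21 / (4 * Real.sqrt 3) - 37 / 12) := by
  have hdeg : ∀ v, G.degree v = 1 ∨ G.degree v = 2 ∨ G.degree v = 3 ∨ G.degree v = 4 := by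
    intro v; have := hmax v; have := hiso v; omega
  set N1 := (Finset.univ.filter fun v => G.degree v = 1).card with hN1
  set N2 := (Finset.univ.filter fun v => G.degree v = 2).card with hN2
  set N3 := (Finset.univ.filter fun v => G.degree v = 3).card with hN3
  set N4 := (Finset.univ.filter fun v => G.degree v = 4).card with hN4
  -- vertex count
  have hnn : n = N1 + N2 + N3 + N4 := by
    have h0 := sum_classes (fun v => G.degree v) hdeg (fun _ => (1 : ℕ))
    simp only [Finset.sum_const, Finset.card_univ, smul_eq_mul, mul_one] at h0
    omega
  -- handshake
  have hmm : 2 * m = N1 + 2 * N2 + 3 * N3 + 4 * N4 := by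
    have h1 := sum_classes (fun v => G.degree v) hdeg (fun k => k)
    rw [G.sum_degrees_eq_twice_card_edges] at h1
    simp only [smul_eq_mul] at h1
    omega
  -- agIndex formula
  have hAG : agIndex G = N1 * (3/4 : ℝ) + N2 * (3 / Real.sqrt 2 - 1)
      + N3 * (21 / (4 * Real.sqrt 3) - 3/2) + N4 * 2 := by
    rw [agIndex_eq G hedge]
    rw [sum_classes (fun v => G.degree v) hdeg (fun k => (k : ℝ) * (agCost k 4 - 1/2))]
    have h2 : Real.sqrt 2 > 0 := Real.sqrt_pos.mpr (by norm_num)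
    have h3 : Real.sqrt 3 > 0 := Real.sqrt_pos.mpr (by norm_num)
    rw [agCost_14, agCost_24, agCost_34, agCost_44]
    simp only [nsmul_eq_mul]
    push_cast
    field_simp
    ring
  have h2 : Real.sqrt 2 > 0 := Real.sqrt_pos.mpr (by norm_num)
  have h3 : Real.sqrt 3 > 0 := Real.sqrt_pos.mpr (by norm_num)
  have hnR : (n:ℝ) = N1 + N2 + N3 + N4 := by exact_mod_cast hnn
  have hmR : 2 * (m:ℝ) = (N1:ℝ) + 2*N2 + 3*N3 + 4*N4 := by exact_mod_cast hmm
  have hc : (N2 = 0 ∧ N3 = 0) ∨ (N2 = 1 ∧ N3 = 0) ∨ (N2 = 0 ∧ N3 = 1) := by omega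
  rcases hc with ⟨e2, e3⟩ | ⟨e2, e3⟩ | ⟨e2, e3⟩ <;>
    rw [e2, e3] at hnR hmR hAG <;> push_cast at hnR hmR hAG <;>
    [rw [if_pos (show (2*(m:ℤ)-n) % 3 = 0 by omega)];
     rw [if_neg (show ¬ (2*(m:ℤ)-n) % 3 = 0 by omega),
         if_pos (show (2*(m:ℤ)-n) % 3 = 1 by omega)];
     rw [if_neg (show ¬ (2*(m:ℤ)-n) % 3 = 0 by omega),
         if_neg (show ¬ (2*(m:ℤ)-n) % 3 = 1 by omega)]] <;>
    rw [hAG] <;> linarith [hnR, hmR]
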